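/- arXiv:1812.00100 — 2 statements merged into one kernel-verified Lean document; each statement's English description precedes it below -/
import Mathlib

section
/- Under the null hypothesis H0 (all P_j equal), for all p, r ≥ 1: ∑_{j=1}^k ∑_{l=1, l≠j}^k ∑_{i=1}^{n_j+n_l} E[Y_{n,p,i,j,l}·Y_{n,r,i,j,l}] = [1 + (k−2)·∑_{l=1}^k (n_l/n)²]·λ_p^{1/2}·λ_r^{1/2}·δ_{pr}, where δ_{pr} is the Kronecker delta; in particular the sum equals λ_p^{1/2} λ_r^{1/2} (1 + O(n^{-1})) δ_{pr}. -/
/-! Each `Y_{n,p,i,j,l}` is a deterministic multiple `c_i` of one centred coordinate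
`⟨e_p, Φ(X)⟩ - E⟨e_p, Φ(X)⟩` of a single observation, so under `H₀` its product with
`Y_{n,r,i,j,l}` has expectation `c_i² Cov(⟨e_p, Φ(X)⟩, ⟨e_r, Φ(X)⟩) = c_i² ⟨e_p, W e_r⟩
= c_i² λ_r δ_{pr}`. The weights `c_i²` add up to `(n_l² + n_j n_l) / n²` over the block of a
pair `(j, l)`, and `∑_{j ≠ l} (n_l² + n_j n_l) = n² + (k - 2) ∑_l n_l²`. -/

open MeasureTheory ProbabilityTheory Filter Finset
open scoped RealInnerProductSpace NNReal Topology

noncomputable section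

/-- The rank-one operator `(u ⊗ v) h = ⟨u, h⟩ v`. -/
def rankOne {H : Type*} [NormedAddCommGroup H] [InnerProductSpace ℝ H] (u v : H) :
    H →L[ℝ] H :=
  (innerSL ℝ u).smulRight v

variable {Ω 𝒳 H : Type*} [NormedAddCommGroup H] [InnerProductSpace ℝ H]

/-- The random variables `Y_{n,p,i,j,l}` of the paper:
for `1 ≤ i ≤ n_j`, `Y = (P_l/√n_j)(e_p(X_i^{(j)}) − E e_p(X_1^{(j)}))`, and for
`n_j + 1 ≤ i ≤ n_j + n_l`, `Y = −(P_l √n_j / n_l)(e_p(X_{i−n_j}^{(l)}) − E e_p(X_1^{(l)}))`,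
where `P_l = n_l/n` and `e_p(x) = ⟨e_p, Φ(x)⟩`. -/
def Yjl [MeasurableSpace 𝒳] (Φ : 𝒳 → H) (e : ℕ → H) {k : ℕ} (nj : Fin k → ℕ) (n : ℕ)
    (X : Fin k → ℕ → Ω → 𝒳) (P : Fin k → Measure 𝒳)
    (p i : ℕ) (j l : Fin k) (ω : Ω) : ℝ :=
  if 1 ≤ i ∧ i ≤ nj j then
    ((nj l : ℝ) / (n : ℝ)) / Real.sqrt (nj j) *
      (⟪e p, Φ (X j (i - 1) ω)⟫ - ∫ x, ⟪e p, Φ x⟫ ∂(P j))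
  else if nj j + 1 ≤ i ∧ i ≤ nj j + nj l then
    -(((nj l : ℝ) / (n : ℝ)) * Real.sqrt (nj j) / (nj l : ℝ)) *
      (⟪e p, Φ (X l (i - nj j - 1) ω)⟫ - ∫ x, ⟪e p, Φ x⟫ ∂(P l))
  else 0

lemma rankOne_apply (u v w : H) : rankOne u v w = ⟪u, w⟫ • v := rfl

lemma norm_rankOne (u v : H) : ‖rankOne u v‖ = ‖u‖ * ‖v‖ := by
  rw [rankOne, ContinuousLinearMap.norm_smulRight_apply, innerSL_apply_norm]

lemma continuous_rankOne : Continuous fun q : H × H => rankOne q.1 q.2 :=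
  isBoundedBilinearMap_smulRight.continuous.comp ((innerSL ℝ).continuous.prodMap continuous_id)

section Covariance

variable [MeasurableSpace 𝒳] {ν : Measure 𝒳} {Φ : 𝒳 → H}

lemma memLp_of_inner_self_le [IsFiniteMeasure ν] (hΦ : AEStronglyMeasurable Φ ν) {C : ℝ}
    (hC : ∀ x, ⟪Φ x, Φ x⟫ ≤ C) (q : ENNReal) : MemLp Φ q ν :=
  MemLp.of_bound hΦ (√C) <| ae_of_all _ fun x => by
    rw [norm_eq_sqrt_real_inner]; exact Real.sqrt_le_sqrt (hC x)

lemma integrable_rankOne_self (hΦ : MemLp Φ 2 ν) :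
    Integrable (fun x => rankOne (Φ x) (Φ x)) ν :=
  ((memLp_two_iff_integrable_sq_norm hΦ.1).1 hΦ).mono'
    (continuous_rankOne.comp_aestronglyMeasurable (hΦ.1.prodMk hΦ.1))
    (ae_of_all _ fun x => by rw [norm_rankOne, sq])

lemma inner_integral_rankOne_self_apply [CompleteSpace H] (hΦ : MemLp Φ 2 ν) (u v : H) :
    ⟪u, (∫ x, rankOne (Φ x) (Φ x) ∂ν) v⟫ = ∫ x, ⟪u, Φ x⟫ * ⟪v, Φ x⟫ ∂ν := by
  have hT := integrable_rankOne_self hΦ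
  rw [ContinuousLinearMap.integral_apply hT,
    ← integral_inner (hT.apply_continuousLinearMap v)]
  simp only [rankOne_apply, real_inner_smul_right, real_inner_comm v, mul_comm]

lemma covariance_inner_eq_inner_integral_rankOne [CompleteSpace H] [IsFiniteMeasure ν]
    (hΦ : MemLp Φ 2 ν) (u v : H) :
    cov[fun x => ⟪u, Φ x⟫, fun x => ⟪v, Φ x⟫; ν]
      = ⟪u, (∫ x, rankOne (Φ x - ∫ y, Φ y ∂ν) (Φ x - ∫ y, Φ y ∂ν) ∂ν) v⟫ := by
  have hΦm : MemLp (fun x => Φ x - ∫ y, Φ y ∂ν) 2 ν := hΦ.sub (memLp_const _)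
  rw [inner_integral_rankOne_self_apply hΦm, covariance,
    integral_inner (hΦ.integrable one_le_two), integral_inner (hΦ.integrable one_le_two)]
  simp only [inner_sub_right]

end Covariance

lemma Orthonormal.inner_apply_eq_of_eigen {ι : Type*} [DecidableEq ι] {e : ι → H}
    (he : Orthonormal ℝ e) {W : H →L[ℝ] H} {lam : ι → ℝ} {p r : ι}
    (heig : W (e r) = lam r • e r) (hlam : 0 ≤ lam r) :
    ⟪e p, W (e r)⟫ = √(lam p) * √(lam r) * if p = r then 1 else 0 := by
  rw [heig, real_inner_smul_right, orthonormal_iff_ite.mp he p r]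
  split_ifs with h
  · subst h; simp [Real.mul_self_sqrt hlam]
  · simp

lemma sum_sum_erase_sq_add_mul {ι R : Type*} [Fintype ι] [DecidableEq ι] [CommRing R]
    (a : ι → R) :
    ∑ j, ∑ l ∈ univ.erase j, (a l ^ 2 + a j * a l)
      = (∑ j, a j) ^ 2 + ((Fintype.card ι : R) - 2) * ∑ j, a j ^ 2 := by
  have hj : ∀ j, ∑ l ∈ univ.erase j, (a l ^ 2 + a j * a l)
      = ∑ l, a l ^ 2 + a j * ∑ l, a l - 2 * a j ^ 2 := fun j => by
    rw [sum_erase_eq_sub (mem_univ j), sum_add_distrib, ← mul_sum]; ring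
  simp only [hj, sum_sub_distrib, sum_add_distrib, sum_const, card_univ, ← sum_mul, ← mul_sum,
    nsmul_eq_mul]
  ring

section Yjl

variable [MeasurableSpace Ω] [MeasurableSpace 𝒳] {μ : Measure Ω} {Φ : 𝒳 → H} {e : ℕ → H}
  {k : ℕ} {nj : Fin k → ℕ} {n : ℕ} {X : Fin k → ℕ → Ω → 𝒳} {P : Fin k → Measure 𝒳}

lemma integral_const_mul_centered_mul {ν : Measure 𝒳} {Z : Ω → 𝒳} (hZ : AEMeasurable Z μ)
    (hlaw : μ.map Z = ν) (hΦ : AEStronglyMeasurable Φ ν) (a : ℝ) (u v : H) :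
    ∫ ω, a * (⟪u, Φ (Z ω)⟫ - ∫ x, ⟪u, Φ x⟫ ∂ν) * (a * (⟪v, Φ (Z ω)⟫ - ∫ x, ⟪v, Φ x⟫ ∂ν)) ∂μ
      = a ^ 2 * cov[fun x => ⟪u, Φ x⟫, fun x => ⟪v, Φ x⟫; ν] := by
  rw [covariance, ← integral_const_mul]
  generalize ∫ x, ⟪u, Φ x⟫ ∂ν = cu
  generalize ∫ x, ⟪v, Φ x⟫ ∂ν = cv
  subst hlaw
  rw [integral_map hZ (by fun_prop)]
  congr 1
  ext ω
  ring

variable (hX : ∀ j t, AEMeasurable (X j t) μ) (hlaw : ∀ j t, μ.map (X j t) = P j)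
  (hΦ : ∀ j, AEStronglyMeasurable Φ (P j))
include hX hlaw hΦ

lemma integral_Yjl_mul_Yjl_of_le (p r : ℕ) (j l : Fin k) {i : ℕ} (hi : 1 ≤ i) (hij : i ≤ nj j) :
    ∫ ω, Yjl Φ e nj n X P p i j l ω * Yjl Φ e nj n X P r i j l ω ∂μ
      = ((nj l : ℝ) / n / √(nj j)) ^ 2 * cov[fun x => ⟪e p, Φ x⟫, fun x => ⟪e r, Φ x⟫; P j] := by
  simp only [Yjl, if_pos (And.intro hi hij)]
  exact integral_const_mul_centered_mul (hX j _) (hlaw j _) (hΦ j) _ _ _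

lemma integral_Yjl_mul_Yjl_of_lt (p r : ℕ) (j l : Fin k) {i : ℕ} (hi : nj j < i)
    (hil : i ≤ nj j + nj l) :
    ∫ ω, Yjl Φ e nj n X P p i j l ω * Yjl Φ e nj n X P r i j l ω ∂μ
      = ((nj l : ℝ) / n * √(nj j) / nj l) ^ 2
          * cov[fun x => ⟪e p, Φ x⟫, fun x => ⟪e r, Φ x⟫; P l] := by
  have hnot : ¬(1 ≤ i ∧ i ≤ nj j) := fun h => h.2.not_gt hi
  simp only [Yjl, if_neg hnot, if_pos (show nj j + 1 ≤ i ∧ i ≤ nj j + nj l from ⟨hi, hil⟩)]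
  rw [← neg_sq]
  exact integral_const_mul_centered_mul (hX l _) (hlaw l _) (hΦ l) _ _ _

lemma sum_integral_Yjl_mul_Yjl (p r : ℕ) {j l : Fin k} (hj : 0 < nj j) (hl : 0 < nj l) :
    ∑ i ∈ Icc 1 (nj j + nj l), ∫ ω, Yjl Φ e nj n X P p i j l ω * Yjl Φ e nj n X P r i j l ω ∂μ
      = ((nj l : ℝ) ^ 2 * cov[fun x => ⟪e p, Φ x⟫, fun x => ⟪e r, Φ x⟫; P j]
          + nj j * nj l * cov[fun x => ⟪e p, Φ x⟫, fun x => ⟪e r, Φ x⟫; P l]) / (n : ℝ) ^ 2 := by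
  rw [show Icc 1 (nj j + nj l) = Ioc 0 (nj j + nj l) from Icc_add_one_left_eq_Ioc 0 _,
    ← sum_Ioc_consecutive _ (Nat.zero_le (nj j)) (Nat.le_add_right _ _),
    sum_congr rfl fun i hi => integral_Yjl_mul_Yjl_of_le (nj := nj) hX hlaw hΦ p r j l
      (mem_Ioc.1 hi).1 (mem_Ioc.1 hi).2,
    sum_congr rfl fun i hi => integral_Yjl_mul_Yjl_of_lt (nj := nj) hX hlaw hΦ p r j l
      (mem_Ioc.1 hi).1 (mem_Ioc.1 hi).2]
  have hj' : (0 : ℝ) < nj j := by exact_mod_cast hj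
  have hl' : (0 : ℝ) < nj l := by exact_mod_cast hl
  simp only [sum_const, Nat.card_Ioc, Nat.sub_zero, Nat.add_sub_cancel_left, nsmul_eq_mul,
    div_pow, mul_pow, Real.sq_sqrt hj'.le]
  field_simp

end Yjl

theorem sum_expect_YY_general
    [MeasurableSpace Ω] (μ : Measure Ω)
    [MeasurableSpace 𝒳] [CompleteSpace H]
    [SecondCountableTopology H] [MeasurableSpace H] [BorelSpace H]
    (Φ : 𝒳 → H) (hΦ : Measurable Φ)
    (CK : ℝ) (hCK : ∀ x y : 𝒳, ⟪Φ x, Φ y⟫ ≤ CK)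
    {k : ℕ} (hk : 2 ≤ k)
    (P : Fin k → Measure 𝒳) (P0 : Measure 𝒳) [IsProbabilityMeasure P0]
    -- null hypothesis: common distribution
    (hH0 : ∀ j, P j = P0)
    (nj : Fin k → ℕ) (hnj : ∀ j, 0 < nj j)
    (n : ℕ) (hn : n = ∑ j, nj j)
    (X : Fin k → ℕ → Ω → 𝒳)
    (hmeas : ∀ j i, Measurable (X j i))
    (hlaw : ∀ j i, Measure.map (X j i) μ = P j)
    -- common covariance operator `W` and its orthonormal eigenbasis
    (m0 : H) (hm0 : m0 = ∫ x, Φ x ∂P0)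
    (W : H →L[ℝ] H) (hW : W = ∫ x, rankOne (Φ x - m0) (Φ x - m0) ∂P0)
    (lam : ℕ → ℝ) (e : ℕ → H)
    (he : Orthonormal ℝ e)
    (heig : ∀ p, W (e p) = lam p • e p)
    (hlam : ∀ p, 0 ≤ lam p) :
    ∀ p r : ℕ,
      ∑ j, ∑ l ∈ Finset.univ.erase j, ∑ i ∈ Finset.Icc 1 (nj j + nj l),
          ∫ ω, Yjl Φ e nj n X P p i j l ω * Yjl Φ e nj n X P r i j l ω ∂μ
        = (1 + ((k : ℝ) - 2) * ∑ l, ((nj l : ℝ) / (n : ℝ)) ^ 2)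
            * Real.sqrt (lam p) * Real.sqrt (lam r) * (if p = r then 1 else 0) := by
  intro p r
  have hΦP0 : AEStronglyMeasurable Φ P0 := hΦ.aestronglyMeasurable
  have hcov : ∀ j, cov[fun x => ⟪e p, Φ x⟫, fun x => ⟪e r, Φ x⟫; P j]
      = √(lam p) * √(lam r) * if p = r then 1 else 0 := fun j => by
    rw [hH0, covariance_inner_eq_inner_integral_rankOne
      (memLp_of_inner_self_le hΦP0 (fun x => hCK x x) 2), ← hm0, ← hW,
      he.inner_apply_eq_of_eigen (heig r) (hlam r)]
  have hblock : ∀ j l, ∑ i ∈ Icc 1 (nj j + nj l),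
      ∫ ω, Yjl Φ e nj n X P p i j l ω * Yjl Φ e nj n X P r i j l ω ∂μ
        = ((nj l : ℝ) ^ 2 + nj j * nj l) / (n : ℝ) ^ 2
            * (√(lam p) * √(lam r) * if p = r then 1 else 0) := fun j l => by
    rw [sum_integral_Yjl_mul_Yjl (fun j t => (hmeas j t).aemeasurable) hlaw
      (fun j => hH0 j ▸ hΦP0) p r (hnj j) (hnj l), hcov, hcov]
    ring
  have hn0 : (n : ℝ) ≠ 0 := Nat.cast_ne_zero.2 <| ne_of_gt <|
    hn ▸ sum_pos (fun j _ => hnj j) ⟨⟨0, by omega⟩, mem_univ _⟩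
  rw [sum_congr rfl fun j _ => sum_congr rfl fun l _ => hblock j l]
  simp_rw [← sum_mul, ← sum_div]
  rw [sum_sum_erase_sq_add_mul, Fintype.card_fin, ← Nat.cast_sum, ← hn]
  simp_rw [div_pow, ← sum_div]
  field_simp

/-- first part of Lemma 3.  Under `H₀`,
`∑_j ∑_{l≠j} ∑_{i=1}^{n_j+n_l} E[Y_{n,p,i,j,l} Y_{n,r,i,j,l}]
  = (1 + (k−2) ∑_l (n_l/n)²) √λ_p √λ_r δ_{pr}`. -/
theorem sum_expect_YY
    [MeasurableSpace Ω] (μ : Measure Ω) [IsProbabilityMeasure μ]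
    [MetricSpace 𝒳] [MeasurableSpace 𝒳] [BorelSpace 𝒳] [CompleteSpace H]
    [SecondCountableTopology H] [MeasurableSpace H] [BorelSpace H]
    (Φ : 𝒳 → H) (hΦ : Measurable Φ)
    (CK : ℝ) (hCK : ∀ x y : 𝒳, ⟪Φ x, Φ y⟫ ≤ CK)
    {k : ℕ} (hk : 2 ≤ k)
    (P : Fin k → Measure 𝒳) (P0 : Measure 𝒳) [IsProbabilityMeasure P0]
    -- null hypothesis: common distribution
    (hH0 : ∀ j, P j = P0)
    (nj : Fin k → ℕ) (hnj : ∀ j, 0 < nj j)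
    (n : ℕ) (hn : n = ∑ j, nj j)
    (X : Fin k → ℕ → Ω → 𝒳)
    (hmeas : ∀ j i, Measurable (X j i))
    (hlaw : ∀ j i, Measure.map (X j i) μ = P j)
    (hindep : iIndepFun
      (fun ji : Fin k × ℕ => X ji.1 ji.2) μ)
    -- common covariance operator `W` and its orthonormal eigenbasis
    (m0 : H) (hm0 : m0 = ∫ x, Φ x ∂P0)
    (W : H →L[ℝ] H) (hW : W = ∫ x, rankOne (Φ x - m0) (Φ x - m0) ∂P0)
    (lam : ℕ → ℝ) (e : ℕ → H)
    (he : Orthonormal ℝ e)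
    (hspan : (Submodule.span ℝ (Set.range e)).topologicalClosure = ⊤)
    (heig : ∀ p, W (e p) = lam p • e p)
    (hlam : ∀ p, 0 ≤ lam p) :
    ∀ p r : ℕ,
      ∑ j, ∑ l ∈ Finset.univ.erase j, ∑ i ∈ Finset.Icc 1 (nj j + nj l),
          ∫ ω, Yjl Φ e nj n X P p i j l ω * Yjl Φ e nj n X P r i j l ω ∂μ
        = (1 + ((k : ℝ) - 2) * ∑ l, ((nj l : ℝ) / (n : ℝ)) ^ 2)
            * Real.sqrt (lam p) * Real.sqrt (lam r) * (if p = r then 1 else 0) :=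
  sum_expect_YY_general μ Φ hΦ CK hCK hk P P0 hH0 nj hnj n hn X hmeas hlaw m0 hm0 W hW lam e he heig
    hlam
end
end

section
/- With Λ_n the n×n Gram matrix of the pooled sample, N_n the block-diagonal centering matrix, γ_n > 0, Ŵ_n = n^{-1}ΓN_nN_n^TΓ^* (Γ the pooled feature map from ℝ^n to H), V̂_n = Ŵ_n + γ_n I, and M_n = (I_n + n^{-1}γ_n^{-1} N_n^T Λ_n N_n)^{-1}, one has the deterministic trace identity: tr(V̂_n^{-2} Ŵ_n²) = tr( n^{-2}γ_n^{-2}(N_n^TΛ_nN_n)² − 2n^{-3}γ_n^{-3}M_n(N_n^TΛ_nN_n)³ + n^{-4}γ_n^{-4}(M_nN_n^TΛ_nN_n)²(N_n^TΛ_nN_n)² ), where the left-hand trace is over operators on H and the right-hand trace over n×n matrices. -/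
/-!
Put `ψ c = ∑ a, N a c • φ a` (the centred features), so that `Ŵ = s Γ Γ*`, `s = n⁻¹`, for
`Γ : ℝ^ι → H`, `e_c ↦ ψ c`, and let `K = sγ⁻¹ Γ*Γ = sγ⁻¹ NᵀΛN`, `M = (1 + K)⁻¹`.
Operators `Γ B Γ*` multiply as `(Γ B Γ*)(Γ C Γ*) = Γ (B Γ*Γ C) Γ*` and have trace `tr (B Γ*Γ)`.
The push-through identity `(Ŵ + γ) Γ (sγ⁻¹ M) Γ* = Ŵ = Γ (sγ⁻¹ M) Γ* (Ŵ + γ)` shows that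
`T = Γ (sγ⁻¹ M) Γ*` equals `(Ŵ + γ)⁻¹ Ŵ` and commutes with `Ŵ`, so `(Ŵ + γ)⁻² Ŵ² = T²`, whose
trace is `tr ((MK)²)`. Finally `MK = 1 - M` commutes with `K`, whence
`K² - 2MK³ + (MK)²K² = (1 - MK)²K² = (MK)²`.
-/

open Finset Matrix
open scoped RealInnerProductSpace

noncomputable section

theorem ring_inverse_add_smul_one_sq_mul_sq {𝕜 R : Type*} [Field 𝕜] [Ring R] [Algebra 𝕜 R]
    {W T : R} {γ : 𝕜} (hγ : γ ≠ 0)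
    (hVT : (W + γ • 1) * T = W) (hTV : T * (W + γ • 1) = W) :
    Ring.inverse (W + γ • 1) ^ 2 * W ^ 2 = T ^ 2 := by
  set V := W + γ • 1
  have hVW : V - W = γ • 1 := add_sub_cancel_left W _
  have hV : IsUnit V := by
    refine ⟨⟨V, γ⁻¹ • (1 - T), ?_, ?_⟩, rfl⟩
    · rw [mul_smul_comm, mul_sub, mul_one, hVT, hVW, smul_smul, inv_mul_cancel₀ hγ, one_smul]
    · rw [smul_mul_assoc, sub_mul, one_mul, hTV, hVW, smul_smul, inv_mul_cancel₀ hγ, one_smul]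
  have hleft : Ring.inverse V * W = T := by
    rw [← hVT, Ring.inverse_mul_cancel_left _ _ hV]
  have hright : W * Ring.inverse V = T := by
    rw [← hTV, Ring.mul_inverse_cancel_right _ _ hV]
  calc Ring.inverse V ^ 2 * W ^ 2 = Ring.inverse V * (Ring.inverse V * W) * W := by noncomm_ring
    _ = Ring.inverse V * (W * Ring.inverse V) * W := by rw [hleft, hright]
    _ = (Ring.inverse V * W) * (Ring.inverse V * W) := by simp only [mul_assoc]
    _ = T ^ 2 := by rw [hleft, sq]

theorem sq_sub_two_mul_cube_add_eq_of_inverse {R : Type*} [Ring R] {K M : R}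
    (hMK : M * (1 + K) = 1) (hKM : (1 + K) * M = 1) :
    K ^ 2 - 2 * (M * K ^ 3) + (M * K) ^ 2 * K ^ 2 = (M * K) ^ 2 := by
  have hM : 1 - M * K = M := by rw [← hMK]; noncomm_ring
  have hcomm : Commute M K := by
    have hM' : 1 - K * M = M := by rw [← hKM]; noncomm_ring
    exact sub_right_injective (hM.trans hM'.symm)
  calc K ^ 2 - 2 * (M * K ^ 3) + (M * K) ^ 2 * K ^ 2 = (1 - M * K) ^ 2 * K ^ 2 := by
        noncomm_ring
    _ = (M * K) ^ 2 := by rw [hM, hcomm.mul_pow]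

theorem smul_sq_sub_smul_add_smul_eq_of_inverse {𝕜 R : Type*} [CommRing 𝕜] [Ring R]
    [Algebra 𝕜 R] {P M : R} {u : 𝕜} (hMK : M * (1 + u • P) = 1) (hKM : (1 + u • P) * M = 1) :
    u ^ 2 • P ^ 2 - (2 * u ^ 3) • (M * P ^ 3) + u ^ 4 • ((M * P) ^ 2 * P ^ 2)
      = (M * (u • P)) ^ 2 := by
  rw [← sq_sub_two_mul_cube_add_eq_of_inverse hMK hKM]
  simp only [smul_pow, mul_smul_comm, smul_mul_assoc, smul_smul, two_mul, add_smul, smul_add,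
    ← pow_add]

section FeatureOp

variable {H ι κ : Type*} [NormedAddCommGroup H] [InnerProductSpace ℝ H] [Fintype ι]

/-- `Γ B Γ*`, where `Γ : ℝ^ι → H` sends the `a`-th basis vector to `φ a`. -/
def featureOp (φ : ι → H) (B : Matrix ι ι ℝ) : H →L[ℝ] H :=
  ∑ a, ∑ c, B a c • rankOne (φ c) (φ a)

theorem featureOp_apply (φ : ι → H) (B : Matrix ι ι ℝ) (h : H) :
    featureOp φ B h = ∑ a, (B *ᵥ fun c => ⟪φ c, h⟫) a • φ a := by
  simp [featureOp, rankOne, mulVec, dotProduct, Finset.sum_smul, smul_smul]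

theorem inner_sum_smul_eq_gram_mulVec (φ : ι → H) (v : ι → ℝ) :
    (fun c => ⟪φ c, ∑ a, v a • φ a⟫) = gram ℝ φ *ᵥ v := by
  ext c
  simp [inner_sum, inner_smul_right, mulVec, dotProduct, gram_apply, mul_comm]

theorem featureOp_mul (φ : ι → H) (B C : Matrix ι ι ℝ) :
    featureOp φ B * featureOp φ C = featureOp φ (B * gram ℝ φ * C) := by
  ext h
  rw [mul_apply_eq_comp, featureOp_apply, featureOp_apply, featureOp_apply,
    inner_sum_smul_eq_gram_mulVec, mulVec_mulVec, mulVec_mulVec]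

theorem featureOp_smul (φ : ι → H) (r : ℝ) (B : Matrix ι ι ℝ) :
    featureOp φ (r • B) = r • featureOp φ B := by
  simp [featureOp, Finset.smul_sum, smul_smul]

theorem featureOp_add (φ : ι → H) (B C : Matrix ι ι ℝ) :
    featureOp φ (B + C) = featureOp φ B + featureOp φ C := by
  simp [featureOp, add_smul, Finset.sum_add_distrib]

theorem featureOp_mul_mul_transpose (φ : ι → H) (N B : Matrix ι ι ℝ) :
    featureOp φ (N * B * Nᵀ) = featureOp (fun c => ∑ a, N a c • φ a) B := by
  ext h
  have synth : ∀ v : ι → ℝ, ∑ c, v c • ∑ a, N a c • φ a = ∑ a, (N *ᵥ v) a • φ a := by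
    intro v
    simp only [Finset.smul_sum, smul_smul, mulVec, dotProduct, Finset.sum_smul]
    rw [Finset.sum_comm]
    simp only [mul_comm]
  have analysis : (fun c => ⟪∑ a, N a c • φ a, h⟫) = Nᵀ *ᵥ fun c => ⟪φ c, h⟫ := by
    ext c
    simp [sum_inner, inner_smul_left, mulVec, dotProduct]
  rw [featureOp_apply, featureOp_apply, analysis, synth]
  simp only [mulVec_mulVec, Matrix.mul_assoc]

theorem gram_sum_smul (φ : ι → H) (N : Matrix ι ι ℝ) :
    gram ℝ (fun c => ∑ a, N a c • φ a) = Nᵀ * gram ℝ φ * N := by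
  ext c d
  simp only [gram_apply, inner_sum, inner_smul_right, sum_inner, inner_smul_left,
    Real.ringHom_apply, mul_sum, mul_apply, transpose_apply, sum_mul]
  exact Finset.sum_congr rfl fun _ _ => Finset.sum_congr rfl fun _ _ => by ring

theorem tsum_inner_featureOp_apply_eq_trace (b : HilbertBasis κ ℝ H) (φ : ι → H)
    (B : Matrix ι ι ℝ) : ∑' p, ⟪b p, featureOp φ B (b p)⟫ = trace (B * gram ℝ φ) := by
  have hsum : ∀ a c, Summable fun p => B a c * (⟪φ c, b p⟫ * ⟪b p, φ a⟫) :=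
    fun a c => (b.summable_inner_mul_inner (φ c) (φ a)).mul_left _
  calc ∑' p, ⟪b p, featureOp φ B (b p)⟫
      = ∑' p, ∑ a, ∑ c, B a c * (⟪φ c, b p⟫ * ⟪b p, φ a⟫) := tsum_congr fun p => by
        simp only [featureOp_apply, inner_sum, inner_smul_right, mulVec, dotProduct,
          Finset.sum_mul]
        exact Finset.sum_congr rfl fun _ _ => Finset.sum_congr rfl fun _ _ => by
          ring
    _ = ∑ a, ∑ c, B a c * ⟪φ c, φ a⟫ := by
        rw [Summable.tsum_finsetSum fun a _ => summable_sum fun c _ => hsum a c]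
        refine Finset.sum_congr rfl fun a _ => ?_
        rw [Summable.tsum_finsetSum fun c _ => hsum a c]
        simp_rw [tsum_mul_left, b.tsum_inner_mul_inner]
    _ = trace (B * gram ℝ φ) := by simp [trace, mul_apply, gram_apply]

theorem featureOp_add_smul_one_mul [DecidableEq ι] (ψ : ι → H) (A B : Matrix ι ι ℝ) (γ : ℝ) :
    (featureOp ψ A + γ • 1) * featureOp ψ B = featureOp ψ ((A * gram ℝ ψ + γ • 1) * B) := by
  rw [add_mul, featureOp_mul, add_mul, featureOp_add, smul_mul_assoc, one_mul, smul_mul_assoc,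
    Matrix.one_mul, featureOp_smul]

theorem featureOp_mul_add_smul_one [DecidableEq ι] (ψ : ι → H) (A B : Matrix ι ι ℝ) (γ : ℝ) :
    featureOp ψ B * (featureOp ψ A + γ • 1) = featureOp ψ (B * (gram ℝ ψ * A + γ • 1)) := by
  rw [mul_add, featureOp_mul, mul_add, featureOp_add, mul_smul_comm, mul_one, mul_smul_comm,
    Matrix.mul_one, featureOp_smul, Matrix.mul_assoc]

theorem isUnit_one_add_smul_gram [DecidableEq ι] (ψ : ι → H) {u : ℝ} (hu : 0 ≤ u) :
    IsUnit (1 + u • gram ℝ ψ) :=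
  (PosDef.one.add_posSemidef ((posSemidef_gram ℝ ψ).smul hu)).isUnit

theorem tsum_inner_resolvent_sq_mul_sq [DecidableEq ι] (b : HilbertBasis κ ℝ H) (ψ : ι → H)
    {s γ : ℝ} (hs : 0 ≤ s) (hγ : 0 < γ) :
    let K := (s * γ⁻¹) • gram ℝ ψ
    ∑' p, ⟪b p, (Ring.inverse (s • featureOp ψ 1 + γ • 1) ^ 2 * (s • featureOp ψ 1) ^ 2) (b p)⟫
      = trace (((1 + K)⁻¹ * K) ^ 2) := by
  intro K
  set M := (1 + K)⁻¹
  have hdet : IsUnit (1 + K).det :=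
    (isUnit_iff_isUnit_det _).mp (isUnit_one_add_smul_gram ψ (by positivity))
  have hγs : γ * (s * γ⁻¹) = s := by field_simp
  have hV : s • 1 * gram ℝ ψ + γ • 1 = γ • (1 + K) := by
    rw [smul_mul_assoc, Matrix.one_mul, smul_add, add_comm, smul_smul, hγs]
  have hV' : gram ℝ ψ * (s • 1) + γ • 1 = γ • (1 + K) := by
    rw [mul_smul_comm, Matrix.mul_one, ← hV, smul_mul_assoc, Matrix.one_mul]
  have hW : s • featureOp ψ 1 = featureOp ψ (s • 1) := (featureOp_smul ψ s 1).symm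
  have hVT : (s • featureOp ψ 1 + γ • 1) * featureOp ψ ((s * γ⁻¹) • M) = s • featureOp ψ 1 := by
    rw [hW, featureOp_add_smul_one_mul, hV, smul_mul_smul_comm, mul_nonsing_inv _ hdet, hγs]
  have hTV : featureOp ψ ((s * γ⁻¹) • M) * (s • featureOp ψ 1 + γ • 1) = s • featureOp ψ 1 := by
    rw [hW, featureOp_mul_add_smul_one, hV', smul_mul_smul_comm, nonsing_inv_mul _ hdet,
      mul_comm, hγs]
  rw [ring_inverse_add_smul_one_sq_mul_sq hγ.ne' hVT hTV, sq, featureOp_mul,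
    tsum_inner_featureOp_apply_eq_trace]
  simp only [sq, K, smul_mul_assoc, mul_smul_comm, Matrix.mul_assoc]

theorem tsum_inner_resolvent_sq_mul_sq_mul_transpose [DecidableEq ι] (b : HilbertBasis κ ℝ H)
    (φ : ι → H) (N : Matrix ι ι ℝ) {s γ : ℝ} (hs : 0 ≤ s) (hγ : 0 < γ) :
    let P := Nᵀ * gram ℝ φ * N
    let M := (1 + (s * γ⁻¹) • P)⁻¹
    ∑' p, ⟪b p, (Ring.inverse (s • featureOp φ (N * Nᵀ) + γ • 1) ^ 2
        * (s • featureOp φ (N * Nᵀ)) ^ 2) (b p)⟫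
      = trace ((s ^ 2 * γ⁻¹ ^ 2) • P ^ 2 - (2 * s ^ 3 * γ⁻¹ ^ 3) • (M * P ^ 3)
          + (s ^ 4 * γ⁻¹ ^ 4) • ((M * P) ^ 2 * P ^ 2)) := by
  intro P M
  set ψ := fun c => ∑ a, N a c • φ a
  have hW : featureOp φ (N * Nᵀ) = featureOp ψ 1 := by
    rw [← featureOp_mul_mul_transpose, Matrix.mul_one]
  have hP : P = gram ℝ ψ := (gram_sum_smul φ N).symm
  have hdet : IsUnit (1 + (s * γ⁻¹) • P).det := by
    rw [← isUnit_iff_isUnit_det, hP]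
    exact isUnit_one_add_smul_gram ψ (by positivity)
  rw [← mul_pow, ← mul_pow, show 2 * s ^ 3 * γ⁻¹ ^ 3 = 2 * (s * γ⁻¹) ^ 3 by ring,
    smul_sq_sub_smul_add_smul_eq_of_inverse (nonsing_inv_mul _ hdet) (mul_nonsing_inv _ hdet),
    hW, hP]
  exact tsum_inner_resolvent_sq_mul_sq b ψ hs hγ

end FeatureOp

theorem trace_identity_normalization_general
    {𝒳 H : Type*} [NormedAddCommGroup H] [InnerProductSpace ℝ H]
    (b : HilbertBasis ℕ ℝ H)
    (Φ : 𝒳 → H) {k : ℕ}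
    (nj : Fin k → ℕ)
    (X : (j : Fin k) → Fin (nj j) → 𝒳)
    (γ : ℝ) (hγ : 0 < γ) :
    letI n : ℕ := ∑ j', nj j'
    letI Lam : Matrix ((j' : Fin k) × Fin (nj j')) ((j' : Fin k) × Fin (nj j')) ℝ :=
      Matrix.of fun a c => ⟪Φ (X a.1 a.2), Φ (X c.1 c.2)⟫
    letI Nn : Matrix ((j' : Fin k) × Fin (nj j')) ((j' : Fin k) × Fin (nj j')) ℝ :=
      Matrix.of fun a c =>
        if a.1 = c.1 then (if a = c then 1 else 0) - ((nj a.1 : ℝ))⁻¹ else 0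
    -- `Ŵ_n = n⁻¹ Γ N_n N_nᵀ Γ^*`, expanded through rank-one operators
    letI What : H →L[ℝ] H :=
      ((n : ℝ))⁻¹ • ∑ a, ∑ c, (Nn * Nnᵀ) a c • rankOne (Φ (X c.1 c.2)) (Φ (X a.1 a.2))
    letI Vn : H →L[ℝ] H := What + γ • (1 : H →L[ℝ] H)
    letI Mn : Matrix ((j' : Fin k) × Fin (nj j')) ((j' : Fin k) × Fin (nj j')) ℝ :=
      ((1 : Matrix _ _ ℝ) + ((n : ℝ)⁻¹ * γ⁻¹) • (Nnᵀ * Lam * Nn))⁻¹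
    (∑' p, ⟪b p, ((Ring.inverse Vn) ^ 2 * What ^ 2) (b p)⟫)
      = Matrix.trace
          (((n : ℝ)⁻¹ ^ 2 * γ⁻¹ ^ 2) • (Nnᵀ * Lam * Nn) ^ 2
            - (2 * (n : ℝ)⁻¹ ^ 3 * γ⁻¹ ^ 3) • (Mn * (Nnᵀ * Lam * Nn) ^ 3)
            + ((n : ℝ)⁻¹ ^ 4 * γ⁻¹ ^ 4) • ((Mn * (Nnᵀ * Lam * Nn)) ^ 2 * (Nnᵀ * Lam * Nn) ^ 2)) :=
  tsum_inner_resolvent_sq_mul_sq_mul_transpose b _ _ (by positivity) hγ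

/-- trace identity for the normalization factor.  With `Λ_n` the Gram
matrix, `N_n` the block-diagonal centering matrix, `Ŵ_n = n⁻¹ Γ N_n N_nᵀ Γ^*`
(written via rank-one operators), `V̂_n = Ŵ_n + γ_n I` and
`M_n = (I + n⁻¹γ_n⁻¹ N_nᵀΛ_nN_n)⁻¹`:
`tr(V̂_n⁻² Ŵ_n²) = tr(n⁻²γ⁻²(N_nᵀΛ_nN_n)² − 2n⁻³γ⁻³M_n(N_nᵀΛ_nN_n)³ + n⁻⁴γ⁻⁴(M_nN_nᵀΛ_nN_n)²(N_nᵀΛ_nN_n)²)`,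
the left trace over `H` (via a Hilbert basis `b`), the right one over `n × n` matrices. -/
theorem trace_identity_normalization
    {𝒳 H : Type*} [NormedAddCommGroup H] [InnerProductSpace ℝ H] [CompleteSpace H]
    (b : HilbertBasis ℕ ℝ H)
    (Φ : 𝒳 → H) {k : ℕ} (hk : 2 ≤ k)
    (nj : Fin k → ℕ) (hnj : ∀ j, 0 < nj j)
    (X : (j : Fin k) → Fin (nj j) → 𝒳)
    (γ : ℝ) (hγ : 0 < γ) :
    letI n : ℕ := ∑ j', nj j'
    letI Lam : Matrix ((j' : Fin k) × Fin (nj j')) ((j' : Fin k) × Fin (nj j')) ℝ :=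
      Matrix.of fun a c => ⟪Φ (X a.1 a.2), Φ (X c.1 c.2)⟫
    letI Nn : Matrix ((j' : Fin k) × Fin (nj j')) ((j' : Fin k) × Fin (nj j')) ℝ :=
      Matrix.of fun a c =>
        if a.1 = c.1 then (if a = c then 1 else 0) - ((nj a.1 : ℝ))⁻¹ else 0
    -- `Ŵ_n = n⁻¹ Γ N_n N_nᵀ Γ^*`, expanded through rank-one operators
    letI What : H →L[ℝ] H :=
      ((n : ℝ))⁻¹ • ∑ a, ∑ c, (Nn * Nnᵀ) a c • rankOne (Φ (X c.1 c.2)) (Φ (X a.1 a.2))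
    letI Vn : H →L[ℝ] H := What + γ • (1 : H →L[ℝ] H)
    letI Mn : Matrix ((j' : Fin k) × Fin (nj j')) ((j' : Fin k) × Fin (nj j')) ℝ :=
      ((1 : Matrix _ _ ℝ) + ((n : ℝ)⁻¹ * γ⁻¹) • (Nnᵀ * Lam * Nn))⁻¹
    (∑' p, ⟪b p, ((Ring.inverse Vn) ^ 2 * What ^ 2) (b p)⟫)
      = Matrix.trace
          (((n : ℝ)⁻¹ ^ 2 * γ⁻¹ ^ 2) • (Nnᵀ * Lam * Nn) ^ 2
            - (2 * (n : ℝ)⁻¹ ^ 3 * γ⁻¹ ^ 3) • (Mn * (Nnᵀ * Lam * Nn) ^ 3)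
            + ((n : ℝ)⁻¹ ^ 4 * γ⁻¹ ^ 4) • ((Mn * (Nnᵀ * Lam * Nn)) ^ 2 * (Nnᵀ * Lam * Nn) ^ 2)) :=
  trace_identity_normalization_general b Φ nj X γ hγ
end
end
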